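/- arXiv:2102.04531 — 2 statements merged into one kernel-verified Lean document; each statement's English description precedes it below -/
import Mathlib

section
/- In the setting of the dissipative encoder construction on n qubits — pairwise commuting Hermitian unitary S_1,…,S_r with S_k² = 1, unitary C_1,…,C_r with C_k S_k = −S_k C_k and C_k S_j = S_j C_k (j ≠ k), Φ_P = Φ_r ∘ ⋯ ∘ Φ_1 with Φ_k(ρ) = A_{+,k} ρ A_{+,k}* + A_{−,k} ρ A_{−,k}*, A_{+,k} = (1+S_k)/2, A_{−,k} = C_k(1−S_k)/2, and operators M_{p,q} = m_{p,q} ⊗ R_{p,q} (indexed by p,q ∈ {0,1}^{n−r}, with m_{p,q} = ⊗_{ℓ} X^{p_ℓ}Z^{q_ℓ} on the first n−r qubits and R_{p,q} on the last r qubits) each commuting with every S_k and every C_k — assume additionally that the operators R_{p,q} are pairwise commuting Hermitian unitaries with R_{p,q}² = 1. Then a density operator σ on (ℂ²)^{⊗r} satisfies tr(R_{p,q} σ) = 1 for all p,q if and only if σ is supported on the joint +1-eigenspace of the family {R_{p,q}}; consequently, for every density σ supported on that joint +1-eigenspace and every density ρ_L on (ℂ²)^{⊗(n−r)}, the output Φ_P(ρ_L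 ⊗ σ) is supported on the joint +1-eigenspace of S_1, …, S_r and satisfies tr(M_{p,q} Φ_P(ρ_L ⊗ σ)) = tr(m_{p,q} ρ_L) for all p, q. -/
open Matrix Kronecker
open scoped ComplexOrder

noncomputable section

/-- A density operator: positive semidefinite with trace 1. -/
def IsDensity {n : Type*} [Fintype n] (ρ : Matrix n n ℂ) : Prop :=
  ρ.PosSemidef ∧ ρ.trace = 1

/-- The Kraus operator `A₊ = (1 + S)/2`. -/
def Apl {n : Type*} [Fintype n] [DecidableEq n] (S : Matrix n n ℂ) : Matrix n n ℂ :=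
  (2:ℂ)⁻¹ • (1 + S)

/-- The Kraus operator `A₋ = C (1 - S)/2`. -/
def Ami {n : Type*} [Fintype n] [DecidableEq n] (C S : Matrix n n ℂ) : Matrix n n ℂ :=
  C * ((2:ℂ)⁻¹ • (1 - S))

/-- The CPTP map `Φ(ρ) = A₊ ρ A₊ᴴ + A₋ ρ A₋ᴴ` of a stabilizer/correction pair. -/
def encMap {n : Type*} [Fintype n] [DecidableEq n] (S C : Matrix n n ℂ)
    (ρ : Matrix n n ℂ) : Matrix n n ℂ :=
  Apl S * ρ * (Apl S)ᴴ + Ami C S * ρ * (Ami C S)ᴴ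

/-- Apply a list of maps in order (head first). -/
def seqApply {M : Type*} (fs : List (M → M)) (ρ : M) : M :=
  fs.foldl (fun a f => f a) ρ

/-- Pauli `X`. -/
def Xm : Matrix (Fin 2) (Fin 2) ℂ := !![0, 1; 1, 0]

/-- Pauli `Z`. -/
def Zm : Matrix (Fin 2) (Fin 2) ℂ := !![1, 0; 0, -1]

/-- The Pauli string `m_{p,q} = ⊗_ℓ X^{p_ℓ} Z^{q_ℓ}` on `u` qubits. -/
def mString (u : ℕ) (p q : Fin u → Fin 2) :
    Matrix (Fin u → Fin 2) (Fin u → Fin 2) ℂ :=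
  Matrix.of fun a b => ∏ ℓ, ((Xm ^ (p ℓ : ℕ)) * (Zm ^ (q ℓ : ℕ))) (a ℓ) (b ℓ)


section helperLemmas
variable {α β : Type*}

private lemma seqApply_cons' (f : α → α) (L : List (α → α)) (a : α) :
    seqApply (f :: L) a = seqApply L (f a) := rfl

private lemma seq_pres (P : α → Prop) (L : List (α → α))
    (h : ∀ f ∈ L, ∀ a, P a → P (f a)) : ∀ a, P a → P (seqApply L a) := by
  induction L with
  | nil => exact fun a ha => ha
  | cons f L ih =>
    intro a ha
    rw [seqApply_cons']
    exact ih (fun g hg => h g (List.mem_cons_of_mem _ hg)) _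
      (h f (List.mem_cons_self) a ha)

private lemma seq_eq (T : α → β) (L : List (α → α))
    (h : ∀ f ∈ L, ∀ a, T (f a) = T a) : ∀ a, T (seqApply L a) = T a := by
  induction L with
  | nil => exact fun a => rfl
  | cons f L ih =>
    intro a
    rw [seqApply_cons', ih (fun g hg => h g (List.mem_cons_of_mem _ hg)),
      h f (List.mem_cons_self)]

private lemma seq_fix_comm (g : α → α) (L : List (α → α))
    (h : ∀ f ∈ L, ∀ a, g (f a) = f (g a)) :
    ∀ a, g a = a → g (seqApply L a) = seqApply L a := by
  induction L with
  | nil => exact fun a ha => ha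
  | cons f L ih =>
    intro a ha
    rw [seqApply_cons']
    exact ih (fun g' hg' => h g' (List.mem_cons_of_mem _ hg')) _
      (by rw [h f (List.mem_cons_self), ha])

private lemma seq_fix (g : α → α) (L : List (α → α))
    (h : ∀ f ∈ L, (∀ a, g (f a) = f (g a)) ∨ (∀ a, g (f a) = f a))
    (hex : ∃ f ∈ L, ∀ a, g (f a) = f a) :
    ∀ a, g (seqApply L a) = seqApply L a := by
  induction L with
  | nil => simp at hex
  | cons f L ih =>
    intro a
    rw [seqApply_cons']
    by_cases hc : ∃ f' ∈ L, ∀ a, g (f' a) = f' a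
    · exact ih (fun g' hg' => h g' (List.mem_cons_of_mem _ hg')) hc _
    · obtain ⟨f', hf', hfix⟩ := hex
      have hf'f : f' = f := by
        rcases List.mem_cons.mp hf' with h1 | h2
        · exact h1
        · exact absurd ⟨f', h2, hfix⟩ hc
      subst hf'f
      refine seq_fix_comm g L ?_ _ (hfix a)
      intro f'' hf'' a'
      rcases h f'' (List.mem_cons_of_mem _ hf'') with hco | hfi
      · exact hco a'
      · exact absurd ⟨f'', hf'', hfi⟩ hc

end helperLemmas

section matHelpers
variable {d : Type*} [Fintype d] [DecidableEq d]

private lemma eq_zero_of_trace_ct (A : Matrix d d ℂ) (h : (Aᴴ * A).trace = 0) :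
    A = 0 := by
  have h2 : ((∑ j, ∑ k, Complex.normSq (A k j) : ℝ) : ℂ) = 0 := by
    rw [← h]
    push_cast
    simp only [Matrix.trace, Matrix.diag, Matrix.mul_apply, Matrix.conjTranspose_apply]
    refine Finset.sum_congr rfl fun j _ => Finset.sum_congr rfl fun k _ => ?_
    rw [Complex.normSq_eq_conj_mul_self]; rfl
  have h3 : (∑ j, ∑ k, Complex.normSq (A k j)) = 0 := by exact_mod_cast h2
  ext k j
  have h4 := (Finset.sum_eq_zero_iff_of_nonneg
    (fun j _ => Finset.sum_nonneg fun k _ => Complex.normSq_nonneg _)).mp h3 j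
    (Finset.mem_univ j)
  have h5 := (Finset.sum_eq_zero_iff_of_nonneg
    (fun k _ => Complex.normSq_nonneg _)).mp h4 k (Finset.mem_univ k)
  simpa using Complex.normSq_eq_zero.mp h5

private lemma mat_eq_of_mulVec (A B : Matrix d d ℂ)
    (h : ∀ v, A.mulVec v = B.mulVec v) : A = B := by
  ext i j
  have := congrFun (h (Pi.single j 1)) i
  simpa [Matrix.mulVec_single] using this

open scoped MatrixOrder in
private lemma fix_of_trace_eq (Rm σ : Matrix d d ℂ) (hH : Rm.IsHermitian)
    (h2 : Rm * Rm = 1) (hσ : σ.PosSemidef) (ht : (Rm * σ).trace = σ.trace) :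
    Rm * σ = σ := by
  set D := (1 : Matrix d d ℂ) - Rm with hD
  set B := CFC.sqrt σ with hB
  have hBB : B * B = σ := CFC.sqrt_mul_sqrt_self σ hσ.nonneg
  have hBH : Bᴴ = B := (CFC.sqrt_nonneg σ).posSemidef.1
  have hDH : Dᴴ = D := by simp [hD, hH.eq]
  have hDD : D * D = (2:ℂ) • D := by
    rw [hD]
    simp only [sub_mul, mul_sub, one_mul, mul_one, h2, two_smul]
    abel
  have hz : ((D * B)ᴴ * (D * B)).trace = 0 := by
    rw [conjTranspose_mul, hDH, hBH, Matrix.mul_assoc, ← Matrix.mul_assoc D D B, hDD,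
      Matrix.smul_mul, Matrix.mul_smul, trace_smul, Matrix.trace_mul_comm B (D * B),
      Matrix.mul_assoc, hBB, hD, sub_mul, one_mul, trace_sub, ht]
    simp
  have hz2 : D * B = 0 := eq_zero_of_trace_ct _ hz
  have hz3 : D * σ = 0 := by
    rw [← hBB, ← Matrix.mul_assoc, hz2, Matrix.zero_mul]
  have h6 : σ - Rm * σ = 0 := by rw [hD, sub_mul, one_mul] at hz3; exact hz3
  exact (sub_eq_zero.mp h6).symm

private lemma proj_fix_of_cols {ι : Type*} (P : Matrix d d ℂ)
    (Sf : ι → Matrix d d ℂ)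
    (heig : ∀ ψ, P.mulVec ψ = ψ ↔ ∀ i, (Sf i).mulVec ψ = ψ)
    (A : Matrix d d ℂ) (hfix : ∀ i, Sf i * A = A) : P * A = A := by
  ext i j
  have hcol : P.mulVec (fun k => A k j) = fun k => A k j := by
    refine (heig _).mpr fun i' => ?_
    funext k
    have := Matrix.ext_iff.mpr (hfix i') k j
    simpa [Matrix.mulVec, dotProduct, Matrix.mul_apply] using this
  have := congrFun hcol i
  simpa [Matrix.mulVec, dotProduct, Matrix.mul_apply] using this

private lemma star_half' : star ((2:ℂ)⁻¹) = (2:ℂ)⁻¹ := by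
  rw [star_inv₀]; norm_num

private lemma comm_Apl (S T : Matrix d d ℂ) (hTS : T * S = S * T) :
    T * Apl S = Apl S * T := by
  rw [Apl, Matrix.mul_smul, Matrix.smul_mul, mul_add, add_mul, mul_one, one_mul, hTS]

private lemma comm_Ami (S C T : Matrix d d ℂ) (hTS : T * S = S * T)
    (hTC : T * C = C * T) : T * Ami C S = Ami C S * T := by
  rw [Ami, ← Matrix.mul_assoc, hTC, Matrix.mul_assoc, Matrix.mul_assoc]
  congr 1
  rw [Matrix.mul_smul, Matrix.smul_mul, mul_sub, sub_mul, mul_one, one_mul, hTS]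

private lemma encMap_comm (S C T : Matrix d d ℂ) (ρ : Matrix d d ℂ)
    (hTS : T * S = S * T) (hTC : T * C = C * T) :
    T * encMap S C ρ = encMap S C (T * ρ) := by
  simp only [encMap, mul_add, ← Matrix.mul_assoc]
  rw [comm_Apl S T hTS, comm_Ami S C T hTS hTC]

private lemma S_Apl (S : Matrix d d ℂ) (hS2 : S * S = 1) : S * Apl S = Apl S := by
  rw [Apl, Matrix.mul_smul, mul_add, mul_one, hS2, add_comm]

private lemma S_Ami (S C : Matrix d d ℂ) (hS2 : S * S = 1)
    (hCS : C * S = -(S * C)) : S * Ami C S = Ami C S := by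
  have hsc : S * C = -(C * S) := by rw [hCS, neg_neg]
  rw [Ami, ← Matrix.mul_assoc, hsc, Matrix.neg_mul, Matrix.mul_assoc,
    Matrix.mul_smul, mul_sub, mul_one, hS2]
  rw [show S - 1 = -(1 - S) by abel, smul_neg, mul_neg, neg_neg]

private lemma encMap_fix (S C : Matrix d d ℂ) (ρ : Matrix d d ℂ) (hS2 : S * S = 1)
    (hCS : C * S = -(S * C)) : S * encMap S C ρ = encMap S C ρ := by
  simp only [encMap, mul_add, ← Matrix.mul_assoc]
  rw [S_Apl S hS2, S_Ami S C hS2 hCS]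

private lemma encMap_herm (S C : Matrix d d ℂ) (ρ : Matrix d d ℂ) (hρ : ρᴴ = ρ) :
    (encMap S C ρ)ᴴ = encMap S C ρ := by
  simp only [encMap, conjTranspose_add, conjTranspose_mul,
    conjTranspose_conjTranspose, hρ, Matrix.mul_assoc]

private lemma kraus_sum (S C : Matrix d d ℂ) (hSH : S.IsHermitian)
    (hS2 : S * S = 1) (hCU : Cᴴ * C = 1) :
    (Apl S)ᴴ * Apl S + (Ami C S)ᴴ * (Ami C S) = 1 := by
  have h1 : (1 + S) * (1 + S) = (2:ℂ) • (1 + S) := by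
    simp only [add_mul, mul_add, one_mul, mul_one, hS2, two_smul]; abel
  have h2 : (1 - S) * (1 - S) = (2:ℂ) • (1 - S) := by
    simp only [sub_mul, mul_sub, one_mul, mul_one, hS2, two_smul]; abel
  have hApl : (Apl S)ᴴ = Apl S := by
    rw [Apl, conjTranspose_smul, star_half', conjTranspose_add, conjTranspose_one, hSH.eq]
  have e1 : (Apl S)ᴴ * Apl S = (2:ℂ)⁻¹ • (1 + S) := by
    rw [hApl, Apl, Matrix.smul_mul, Matrix.mul_smul, h1, smul_smul, smul_smul]
    norm_num
  have e2 : (Ami C S)ᴴ * (Ami C S) = (2:ℂ)⁻¹ • (1 - S) := by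
    rw [Ami, conjTranspose_mul, conjTranspose_smul, star_half', conjTranspose_sub,
      conjTranspose_one, hSH.eq, Matrix.mul_assoc, ← Matrix.mul_assoc Cᴴ C _, hCU,
      one_mul, Matrix.smul_mul, Matrix.mul_smul, h2, smul_smul, smul_smul]
    norm_num
  rw [e1, e2, ← smul_add]
  rw [show (1 + S) + (1 - S) = (2:ℂ) • 1 by rw [two_smul]; abel, smul_smul]
  norm_num

private lemma encMap_trace (S C T : Matrix d d ℂ) (ρ : Matrix d d ℂ)
    (hSH : S.IsHermitian) (hS2 : S * S = 1) (hCU : Cᴴ * C = 1)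
    (hTA : T * Apl S = Apl S * T) (hTB : T * Ami C S = Ami C S * T) :
    (T * encMap S C ρ).trace = (T * ρ).trace := by
  have key : ∀ A : Matrix d d ℂ, T * A = A * T →
      (T * (A * ρ * Aᴴ)).trace = ((Aᴴ * A) * (T * ρ)).trace := by
    intro A hA
    rw [show T * (A * ρ * Aᴴ) = (A * (T * ρ)) * Aᴴ by
      rw [← Matrix.mul_assoc, ← Matrix.mul_assoc, ← Matrix.mul_assoc, hA],
      Matrix.trace_mul_comm, ← Matrix.mul_assoc]
  rw [encMap, mul_add, trace_add, key _ hTA, key _ hTB, ← trace_add, ← add_mul,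
    kraus_sum S C hSH hS2 hCU, one_mul]

private lemma kron_herm {e : Type*} [Fintype e] (A : Matrix d d ℂ)
    (B : Matrix e e ℂ) (hA : Aᴴ = A) (hB : Bᴴ = B) : (A ⊗ₖ B)ᴴ = A ⊗ₖ B := by
  ext i j
  simp only [conjTranspose_apply, kroneckerMap_apply, star_mul']
  rw [← Matrix.conjTranspose_apply A, ← Matrix.conjTranspose_apply B, hA, hB]

end matHelpers

/-- when moreover the gauge operators `R_{p,q}` are pairwise
commuting Hermitian unitaries, `tr(R_{p,q} σ) = 1` for all `p,q` is equivalent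
to `σ` being supported on their joint `+1`-eigenspace; and for every such `σ`
the encoder prepares the code and reproduces the logical expectations. -/
theorem stmt8 (n r : ℕ) (hrn : r ≤ n)
    (S C : Fin r → Matrix ((Fin (n-r) → Fin 2) × (Fin r → Fin 2))
      ((Fin (n-r) → Fin 2) × (Fin r → Fin 2)) ℂ)
    (R : (Fin (n-r) → Fin 2) → (Fin (n-r) → Fin 2) →
      Matrix (Fin r → Fin 2) (Fin r → Fin 2) ℂ)
    (hSH : ∀ k, (S k).IsHermitian)
    (hS2 : ∀ k, S k * S k = 1)
    (hScomm : ∀ k j, S k * S j = S j * S k)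
    (hCU : ∀ k, (C k)ᴴ * C k = 1 ∧ C k * (C k)ᴴ = 1)
    (hCS : ∀ k, C k * S k = -(S k * C k))
    (hCSj : ∀ k j, j ≠ k → C k * S j = S j * C k)
    (hMS : ∀ p q k, (mString (n-r) p q ⊗ₖ R p q) * S k = S k * (mString (n-r) p q ⊗ₖ R p q))
    (hMC : ∀ p q k, (mString (n-r) p q ⊗ₖ R p q) * C k = C k * (mString (n-r) p q ⊗ₖ R p q))
    (hRH : ∀ p q, (R p q).IsHermitian)
    (hR2 : ∀ p q, R p q * R p q = 1)
    (hRcomm : ∀ p q p' q', R p q * R p' q' = R p' q' * R p q)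
    (Pc : Matrix ((Fin (n-r) → Fin 2) × (Fin r → Fin 2))
      ((Fin (n-r) → Fin 2) × (Fin r → Fin 2)) ℂ)
    (hPcH : Pc.IsHermitian) (hPc2 : Pc * Pc = Pc)
    (hPceig : ∀ ψ, Pc.mulVec ψ = ψ ↔ ∀ k, (S k).mulVec ψ = ψ)
    (PR : Matrix (Fin r → Fin 2) (Fin r → Fin 2) ℂ)
    (hPRH : PR.IsHermitian) (hPR2 : PR * PR = PR)
    (hPReig : ∀ ψ, PR.mulVec ψ = ψ ↔ ∀ p q, (R p q).mulVec ψ = ψ) :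
    (∀ σ : Matrix (Fin r → Fin 2) (Fin r → Fin 2) ℂ, IsDensity σ →
      ((∀ p q, (R p q * σ).trace = 1) ↔ PR * σ * PR = σ)) ∧
    (∀ (ρL : Matrix (Fin (n-r) → Fin 2) (Fin (n-r) → Fin 2) ℂ)
       (σ : Matrix (Fin r → Fin 2) (Fin r → Fin 2) ℂ),
      IsDensity ρL → IsDensity σ → PR * σ * PR = σ →
      (Pc * seqApply (List.ofFn fun k => encMap (S k) (C k)) (ρL ⊗ₖ σ) * Pc
          = seqApply (List.ofFn fun k => encMap (S k) (C k)) (ρL ⊗ₖ σ) ∧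
       ∀ p q, ((mString (n-r) p q ⊗ₖ R p q) *
            seqApply (List.ofFn fun k => encMap (S k) (C k)) (ρL ⊗ₖ σ)).trace
          = (mString (n-r) p q * ρL).trace)) := by

  classical
  have main1 : ∀ σ : Matrix (Fin r → Fin 2) (Fin r → Fin 2) ℂ, IsDensity σ →
      ((∀ p q, (R p q * σ).trace = 1) ↔ PR * σ * PR = σ) := by
    intro σ hσ
    constructor
    · intro h
      have hfix : ∀ p q, R p q * σ = σ := fun p q =>
        fix_of_trace_eq _ _ (hRH p q) (hR2 p q) hσ.1 (by rw [h p q, hσ.2])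
      have hPσ : PR * σ = σ := by
        refine proj_fix_of_cols PR (fun i : ((Fin (n-r) → Fin 2) × (Fin (n-r) → Fin 2)) =>
          R i.1 i.2) (fun ψ => (hPReig ψ).trans
            ⟨fun h' i => h' i.1 i.2, fun h' p q => h' (p, q)⟩) σ (fun i => hfix i.1 i.2)
      have hσP : σ * PR = σ := by
        have hc := congrArg conjTranspose hPσ
        rwa [conjTranspose_mul, hPRH.eq, hσ.1.1] at hc
      rw [hPσ, hσP]
    · intro h p q
      have hPσ : PR * σ = σ := by
        conv_lhs => rw [← h]
        rw [← Matrix.mul_assoc, ← Matrix.mul_assoc, hPR2, h]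
      have hRP : R p q * PR = PR := by
        refine mat_eq_of_mulVec _ _ fun v => ?_
        have hfixv : PR.mulVec (PR.mulVec v) = PR.mulVec v := by
          rw [Matrix.mulVec_mulVec, hPR2]
        calc (R p q * PR).mulVec v = (R p q).mulVec (PR.mulVec v) := by
              rw [Matrix.mulVec_mulVec]
          _ = PR.mulVec v := (hPReig (PR.mulVec v)).mp hfixv p q
      have : R p q * σ = σ := by
        rw [← hPσ, ← Matrix.mul_assoc, hRP, hPσ]
      rw [this, hσ.2]
  refine ⟨main1, ?_⟩
  intro ρL σ hρL hσ hsupp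
  set L := List.ofFn fun k => encMap (S k) (C k) with hL
  have hmem : ∀ f ∈ L, ∃ j, f = encMap (S j) (C j) := by
    intro f hf
    obtain ⟨j, hj⟩ := (List.mem_ofFn).mp hf
    exact ⟨j, hj.symm⟩
  have hkronH : (ρL ⊗ₖ σ)ᴴ = ρL ⊗ₖ σ := kron_herm _ _ hρL.1.1 hσ.1.1
  have hH : (seqApply L (ρL ⊗ₖ σ))ᴴ = seqApply L (ρL ⊗ₖ σ) := by
    refine seq_pres (fun a => aᴴ = a) L ?_ _ hkronH
    intro f hf a ha
    obtain ⟨j, hj⟩ := hmem f hf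
    rw [hj]
    exact encMap_herm _ _ a ha
  have hSfix : ∀ k, S k * seqApply L (ρL ⊗ₖ σ) = seqApply L (ρL ⊗ₖ σ) := by
    intro k
    refine seq_fix (fun a => S k * a) L ?_ ?_ _
    · intro f hf
      obtain ⟨j, hj⟩ := hmem f hf
      subst hj
      by_cases hjk : j = k
      · subst hjk
        exact Or.inr fun a => encMap_fix _ _ a (hS2 j) (hCS j)
      · exact Or.inl fun a =>
          encMap_comm _ _ _ a (hScomm k j) (hCSj j k (Ne.symm hjk)).symm
    · exact ⟨encMap (S k) (C k), (List.mem_ofFn).mpr ⟨k, rfl⟩,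
        fun a => encMap_fix _ _ a (hS2 k) (hCS k)⟩
  have hPcρ : Pc * seqApply L (ρL ⊗ₖ σ) = seqApply L (ρL ⊗ₖ σ) :=
    proj_fix_of_cols Pc S hPceig _ hSfix
  have hρPc : seqApply L (ρL ⊗ₖ σ) * Pc = seqApply L (ρL ⊗ₖ σ) := by
    have hc := congrArg conjTranspose hPcρ
    rwa [conjTranspose_mul, hPcH.eq, hH] at hc
  refine ⟨by rw [hPcρ, hρPc], ?_⟩
  intro p q
  have hRσ : (R p q * σ).trace = 1 := (main1 σ hσ).mpr hsupp p q
  have htr := seq_eq (fun a => ((mString (n-r) p q ⊗ₖ R p q) * a).trace) L ?_ (ρL ⊗ₖ σ)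
  · rw [htr, ← Matrix.mul_kronecker_mul, Matrix.trace_kronecker, hRσ, mul_one]
  · intro f hf a
    obtain ⟨j, hj⟩ := hmem f hf
    rw [hj]
    exact encMap_trace _ _ _ a (hSH j) (hS2 j) (hCU j).1
      (comm_Apl _ _ (hMS p q j)) (comm_Ami _ _ _ (hMS p q j) (hMC p q j))
end
end

section
/- Let Φ_L be the initialization map of a subsystem initialization (V', τ') of ℂ^{d_L} into ℂ^{d_P} with τ' of full rank, let 𝒩 : M_{d_P}(ℂ) → M_{d_P}(ℂ) be a CPTP map, and fix λ̂ ∈ (0,1). Suppose there exist a subsystem initialization (V'', τ'') of ℂ^{d_L} into ℂ^{d_P}, with τ'' of full rank, such that ℳ_{λ̂}(Φ_L(ρ)) = V''(ρ ⊗ τ'' ⊕ 0)V''* for every density operator ρ on ℂ^{d_L}, where ℳ_{λ̂} = λ̂𝒩 + (1−λ̂)·id, and suppose that the initializations (V', τ') and (V'', τ'') are compatible. Fix any density operator τ_F on ℂ^{d_{F''}} and define the CPTP map Φ_{λ̂}(A) = V'' ( (id ⊗ ℱ)(B₁₁) ⊕ B₂₂ ) V''*, where B₁₁ and B₂₂ are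 the diagonal blocks of V''* A V'' with respect to the decomposition (ℂ^{d_L} ⊗ ℂ^{d_{F''}}) ⊕ ℂ^{d_{R''}} and ℱ(σ) = tr(σ) τ_F. Then for every density operator ρ on ℂ^{d_L}: Φ_{λ̂}(Φ_L(ρ)) = V''(ρ ⊗ τ_F ⊕ 0)V''* and Φ_{λ̂}(𝒩(Φ_L(ρ))) = Φ_{λ̂}(Φ_L(ρ)); that is, Φ_{λ̂} is an encoder into the code given by (V'', τ_F) which tolerates the noise 𝒩. -/
open Matrix Kronecker
open scoped ComplexOrder

noncomputable section

/-- A map between matrix spaces is CPTP if it has a Kraus representation. -/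
def IsCPTP {n₁ n₂ : Type*} [Fintype n₁] [Fintype n₂] [DecidableEq n₁] [DecidableEq n₂]
    (Φ : Matrix n₁ n₁ ℂ → Matrix n₂ n₂ ℂ) : Prop :=
  ∃ (m : ℕ) (K : Fin m → Matrix n₂ n₁ ℂ),
    (∀ A, Φ A = ∑ i, K i * A * (K i)ᴴ) ∧ (∑ i, (K i)ᴴ * K i = 1)

/-- A unitary matrix (between possibly differently indexed spaces). -/
def IsUnitaryMx {m n : Type*} [Fintype m] [Fintype n] [DecidableEq m] [DecidableEq n]
    (V : Matrix m n ℂ) : Prop :=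
  Vᴴ * V = 1 ∧ V * Vᴴ = 1

/-- The map `ρ ↦ V (ρ ⊗ τ ⊕ 0) Vᴴ` of a subsystem initialization `(V, τ)`. -/
def initMap {L F R P : Type*} [Fintype L] [Fintype F] [Fintype R] [Fintype P]
    (V : Matrix P ((L × F) ⊕ R) ℂ) (τ : Matrix F F ℂ) (ρ : Matrix L L ℂ) :
    Matrix P P ℂ :=
  V * (Matrix.fromBlocks (ρ ⊗ₖ τ) 0 0 0 : Matrix ((L × F) ⊕ R) ((L × F) ⊕ R) ℂ) * Vᴴ

/-- The orthogonal projection `Π_V = V (1 ⊗ 1 ⊕ 0) Vᴴ` onto the image of the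
tensor summand. -/
def projOf {L F R P : Type*} [Fintype L] [Fintype F] [Fintype R] [Fintype P]
    [DecidableEq L] [DecidableEq F]
    (V : Matrix P ((L × F) ⊕ R) ℂ) : Matrix P P ℂ :=
  V * (Matrix.fromBlocks 1 0 0 0 : Matrix ((L × F) ⊕ R) ((L × F) ⊕ R) ℂ) * Vᴴ

/-- Compatibility of two subsystem initializations. -/
def Compatible {dL dP dF1 dR1 dF2 dR2 : ℕ}
    (V1 : Matrix (Fin dP) ((Fin dL × Fin dF1) ⊕ Fin dR1) ℂ)
    (τ1 : Matrix (Fin dF1) (Fin dF1) ℂ)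
    (V2 : Matrix (Fin dP) ((Fin dL × Fin dF2) ⊕ Fin dR2) ℂ)
    (τ2 : Matrix (Fin dF2) (Fin dF2) ℂ) : Prop :=
  ∃ (t1 : Matrix (Fin dF1) (Fin dF1) ℂ) (t2 : Matrix (Fin dF2) (Fin dF2) ℂ),
    t1.PosSemidef ∧ t2.PosSemidef ∧
    ∀ ρ : Matrix (Fin dL) (Fin dL) ℂ, IsDensity ρ →
      projOf V1 * initMap V2 τ2 ρ * projOf V1 = initMap V1 t1 ρ ∧
      projOf V2 * initMap V1 τ1 ρ * projOf V2 = initMap V2 t2 ρ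

/-- Partial trace over the second tensor factor. -/
def ptrF {L F : Type*} [Fintype L] [Fintype F]
    (B : Matrix (L × F) (L × F) ℂ) : Matrix L L ℂ :=
  Matrix.of fun i i' => ∑ j, B (i, j) (i', j)

/-!
Conjugating the defining identity of `ℳ_λ̂` by `V''` gives `λ̂ M + (1 - λ̂) C = (ρ ⊗ τ'') ⊕ 0`
with `C = V''ᴴ Φ_L(ρ) V''` and `M = V''ᴴ 𝒩(Φ_L(ρ)) V''`, both positive semidefinite. A sum of
positive semidefinite matrices vanishes only if each summand does, so the `R''`-blocks of `C` and
`M` are zero. Compatibility identifies the tensor block of `C` as `ρ ⊗ t''`, and `tr C = 1`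
forces `tr t'' = 1`, so the partial trace of that block is `ρ`; comparing partial traces of the
tensor blocks in the identity gives the same for `M`. The encoder only reads these partial traces
and the `R''`-blocks, hence sends both inputs to `V'' (ρ ⊗ τ_F ⊕ 0) V''ᴴ`.
-/

namespace Matrix

variable {l m n o : Type*}

@[simp] lemma toBlocks₁₁_add {α : Type*} [Add α] (M N : Matrix (m ⊕ n) (l ⊕ o) α) :
    (M + N).toBlocks₁₁ = M.toBlocks₁₁ + N.toBlocks₁₁ := rfl

@[simp] lemma toBlocks₁₁_smul {R α : Type*} [SMul R α] (r : R) (M : Matrix (m ⊕ n) (l ⊕ o) α) :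
    (r • M).toBlocks₁₁ = r • M.toBlocks₁₁ := rfl

@[simp] lemma toBlocks₂₂_add {α : Type*} [Add α] (M N : Matrix (m ⊕ n) (l ⊕ o) α) :
    (M + N).toBlocks₂₂ = M.toBlocks₂₂ + N.toBlocks₂₂ := rfl

@[simp] lemma toBlocks₂₂_smul {R α : Type*} [SMul R α] (r : R) (M : Matrix (m ⊕ n) (l ⊕ o) α) :
    (r • M).toBlocks₂₂ = r • M.toBlocks₂₂ := rfl

open scoped MatrixOrder in
lemma PosSemidef.eq_zero_of_smul_add_smul_eq_zero {a b : ℝ} (ha : 0 < a) (hb : 0 < b)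
    {A B : Matrix n n ℂ} (hA : A.PosSemidef) (hB : B.PosSemidef)
    (h : (a : ℂ) • A + (b : ℂ) • B = 0) : A = 0 ∧ B = 0 := by
  have haA := (hA.smul (by exact_mod_cast ha.le : (0 : ℂ) ≤ a)).nonneg
  have hbB := (hB.smul (by exact_mod_cast hb.le : (0 : ℂ) ≤ b)).nonneg
  simpa [ha.ne', hb.ne'] using (add_eq_zero_iff_of_nonneg haA hbB).mp h

lemma toBlocks₂₂_eq_zero_of_smul_add_smul_eq_fromBlocks {a b : ℝ} (ha : 0 < a) (hb : 0 < b)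
    {M C : Matrix (m ⊕ n) (m ⊕ n) ℂ}    (hM : M.PosSemidef) (hC : C.PosSemidef) {B : Matrix m m ℂ}
    (h : (a : ℂ) • M + (b : ℂ) • C = fromBlocks B 0 0 0) :
    M.toBlocks₂₂ = 0 ∧ C.toBlocks₂₂ = 0 :=
  PosSemidef.eq_zero_of_smul_add_smul_eq_zero ha hb (hM.submatrix Sum.inr)
    (hC.submatrix Sum.inr) (by simpa using congrArg toBlocks₂₂ h)

variable [Fintype m] [Fintype n]

lemma trace_fromBlocks {α : Type*} [AddCommMonoid α] (A : Matrix m m α) (B : Matrix m n α)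
    (C : Matrix n m α) (D : Matrix n n α) :
    (fromBlocks A B C D).trace = A.trace + D.trace := by
  simp [trace, Fintype.sum_sum_type]

lemma trace_mul_mul_of_mul_eq_one {p α : Type*} [Fintype p] [DecidableEq m] [CommSemiring α]
    {U : Matrix p m α} {W : Matrix m p α} (h : W * U = 1) (A : Matrix m m α) :
    (U * A * W).trace = A.trace := by
  rw [trace_mul_cycle, h, Matrix.one_mul]

lemma conjTranspose_mul_conj_mul_cancel {p α : Type*} [Fintype p] [DecidableEq m] [Semiring α]
    [StarRing α] {V : Matrix p m α} (hV : Vᴴ * V = 1) (B : Matrix m m α) :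
    Vᴴ * (V * B * Vᴴ) * V = B := by
  simp only [Matrix.mul_assoc, hV, Matrix.mul_one, ← Matrix.mul_assoc Vᴴ V, Matrix.one_mul]

lemma PosSemidef.fromBlocks_zero {A : Matrix m m ℂ} (hA : A.PosSemidef) :
    (fromBlocks A 0 0 (0 : Matrix n n ℂ)).PosSemidef := by
  classical
  have h := hA.mul_mul_conjTranspose_same (fromRows (1 : Matrix m m ℂ) (0 : Matrix n m ℂ))
  rw [conjTranspose_fromRows_eq_fromCols_conjTranspose, fromRows_mul, fromRows_mul_fromCols] at h
  simpa using h

end Matrix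

lemma IsCPTP.posSemidef_apply {n₁ n₂ : Type*} [Fintype n₁] [Fintype n₂] [DecidableEq n₁]
    [DecidableEq n₂] {Φ : Matrix n₁ n₁ ℂ → Matrix n₂ n₂ ℂ} (hΦ : IsCPTP Φ) {A : Matrix n₁ n₁ ℂ}
    (hA : A.PosSemidef) : (Φ A).PosSemidef := by
  obtain ⟨m, K, hK, -⟩ := hΦ
  rw [hK]
  exact posSemidef_sum _ fun i _ => hA.mul_mul_conjTranspose_same (K i)

section Blocks

variable {L F R P : Type*} [Fintype L] [Fintype F]

lemma ptrF_add (X Y : Matrix (L × F) (L × F) ℂ) : ptrF (X + Y) = ptrF X + ptrF Y := by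
  ext i i'
  simp [ptrF, Finset.sum_add_distrib]

lemma ptrF_smul (c : ℂ) (X : Matrix (L × F) (L × F) ℂ) : ptrF (c • X) = c • ptrF X := by
  ext i i'
  simp [ptrF, Finset.mul_sum]

lemma ptrF_kronecker (ρ : Matrix L L ℂ) (τ : Matrix F F ℂ) : ptrF (ρ ⊗ₖ τ) = τ.trace • ρ := by
  ext i i'
  simp [ptrF, trace, kroneckerMap_apply, ← Finset.mul_sum, mul_comm]

lemma ptrF_toBlocks₁₁_eq_of_smul_add_smul_eq {a b : ℂ} (ha : a ≠ 0) (hab : a + b = 1)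
    {M C : Matrix ((L × F) ⊕ R) ((L × F) ⊕ R) ℂ} {ρ : Matrix L L ℂ} {τ : Matrix F F ℂ}
    (hτ : τ.trace = 1) (hC : ptrF C.toBlocks₁₁ = ρ)
    (h : a • M + b • C = fromBlocks (ρ ⊗ₖ τ) 0 0 0) : ptrF M.toBlocks₁₁ = ρ := by
  have h₁₁ := congrArg (fun X => ptrF X.toBlocks₁₁) h
  simp only [toBlocks₁₁_add, toBlocks₁₁_smul, toBlocks_fromBlocks₁₁, ptrF_add, ptrF_smul,
    ptrF_kronecker, hC, hτ, one_smul] at h₁₁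
  apply smul_right_injective _ ha
  linear_combination (norm := module) h₁₁ - hab • ρ

variable [Fintype R] [Fintype P]

lemma initMap_posSemidef (V : Matrix P ((L × F) ⊕ R) ℂ) {τ : Matrix F F ℂ} {ρ : Matrix L L ℂ}
    (hρ : ρ.PosSemidef) (hτ : τ.PosSemidef) : (initMap V τ ρ).PosSemidef :=
  (hρ.kronecker hτ).fromBlocks_zero.mul_mul_conjTranspose_same V

/-- The encoder `Φ_λ̂`. -/
def resetGauge (V : Matrix P ((L × F) ⊕ R) ℂ) (τ : Matrix F F ℂ) (A : Matrix P P ℂ) :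
    Matrix P P ℂ :=
  V * fromBlocks (ptrF (Vᴴ * A * V).toBlocks₁₁ ⊗ₖ τ) 0 0 (Vᴴ * A * V).toBlocks₂₂ * Vᴴ

lemma resetGauge_eq_initMap {V : Matrix P ((L × F) ⊕ R) ℂ} {A : Matrix P P ℂ}
    {ρ : Matrix L L ℂ} (τ : Matrix F F ℂ) (h₁₁ : ptrF (Vᴴ * A * V).toBlocks₁₁ = ρ)
    (h₂₂ : (Vᴴ * A * V).toBlocks₂₂ = 0) : resetGauge V τ A = initMap V τ ρ := by
  rw [resetGauge, h₁₁, h₂₂, initMap]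

variable [DecidableEq L] [DecidableEq F] [DecidableEq R]

lemma trace_initMap {V : Matrix P ((L × F) ⊕ R) ℂ} (hV : Vᴴ * V = 1) (τ : Matrix F F ℂ)
    (ρ : Matrix L L ℂ) : (initMap V τ ρ).trace = ρ.trace * τ.trace := by
  rw [initMap, trace_mul_mul_of_mul_eq_one hV, trace_fromBlocks, trace_kronecker, trace_zero,
    add_zero]

lemma conjTranspose_mul_initMap_mul {V : Matrix P ((L × F) ⊕ R) ℂ} (hV : Vᴴ * V = 1)
    (τ : Matrix F F ℂ) (ρ : Matrix L L ℂ) :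
    Vᴴ * initMap V τ ρ * V = fromBlocks (ρ ⊗ₖ τ) 0 0 0 :=
  conjTranspose_mul_conj_mul_cancel hV _

lemma toBlocks₁₁_conjTranspose_mul_projOf_conj {V : Matrix P ((L × F) ⊕ R) ℂ}
    (hV : Vᴴ * V = 1) (A : Matrix P P ℂ) :
    (Vᴴ * (projOf V * A * projOf V) * V).toBlocks₁₁ = (Vᴴ * A * V).toBlocks₁₁ := by
  have hconj : projOf V * A * projOf V
      = V * (fromBlocks 1 0 0 0 * (Vᴴ * A * V) * fromBlocks 1 0 0 0) * Vᴴ := by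
    simp only [projOf, Matrix.mul_assoc]
  rw [hconj, conjTranspose_mul_conj_mul_cancel hV, ← fromBlocks_toBlocks (Vᴴ * A * V)]
  simp [fromBlocks_multiply]

end Blocks

theorem stmt18_general (dL dP dF' dR' dF'' dR'' : ℕ)
    (V' : Matrix (Fin dP) ((Fin dL × Fin dF') ⊕ Fin dR') ℂ)
    (hV' : IsUnitaryMx V')
    (τ' : Matrix (Fin dF') (Fin dF') ℂ)
    (hτ' : τ'.PosDef ∧ τ'.trace = 1)
    (𝒩 : Matrix (Fin dP) (Fin dP) ℂ → Matrix (Fin dP) (Fin dP) ℂ)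
    (h𝒩 : IsCPTP 𝒩)
    (lh : ℝ) (hlh : lh ∈ Set.Ioo (0:ℝ) 1)
    (V'' : Matrix (Fin dP) ((Fin dL × Fin dF'') ⊕ Fin dR'') ℂ)
    (hV'' : IsUnitaryMx V'')
    (τ'' : Matrix (Fin dF'') (Fin dF'') ℂ)
    (hτ'' : τ''.PosDef ∧ τ''.trace = 1)
    (hMl : ∀ ρ : Matrix (Fin dL) (Fin dL) ℂ, IsDensity ρ →
      (lh : ℂ) • 𝒩 (initMap V' τ' ρ) + ((1 - lh : ℝ) : ℂ) • initMap V' τ' ρ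
        = initMap V'' τ'' ρ)
    (hcomp : Compatible V' τ' V'' τ'')
    (τF : Matrix (Fin dF'') (Fin dF'') ℂ) :
    ∀ ρ : Matrix (Fin dL) (Fin dL) ℂ, IsDensity ρ →
      (fun A : Matrix (Fin dP) (Fin dP) ℂ =>
          V'' * Matrix.fromBlocks
            ((ptrF (Matrix.toBlocks₁₁ (V''ᴴ * A * V''))) ⊗ₖ τF) 0 0
            (Matrix.toBlocks₂₂ (V''ᴴ * A * V'')) * V''ᴴ) (initMap V' τ' ρ)
        = initMap V'' τF ρ ∧
      (fun A : Matrix (Fin dP) (Fin dP) ℂ =>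
          V'' * Matrix.fromBlocks
            ((ptrF (Matrix.toBlocks₁₁ (V''ᴴ * A * V''))) ⊗ₖ τF) 0 0
            (Matrix.toBlocks₂₂ (V''ᴴ * A * V'')) * V''ᴴ) (𝒩 (initMap V' τ' ρ))
        = (fun A : Matrix (Fin dP) (Fin dP) ℂ =>
          V'' * Matrix.fromBlocks
            ((ptrF (Matrix.toBlocks₁₁ (V''ᴴ * A * V''))) ⊗ₖ τF) 0 0
            (Matrix.toBlocks₂₂ (V''ᴴ * A * V'')) * V''ᴴ) (initMap V' τ' ρ) := by
  intro ρ hρ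
  set X := initMap V' τ' ρ
  set C := V''ᴴ * X * V''
  set M := V''ᴴ * 𝒩 X * V''
  have hX : X.PosSemidef := initMap_posSemidef V' hρ.1 hτ'.1.posSemidef
  have hkey : (lh : ℂ) • M + ((1 - lh : ℝ) : ℂ) • C = fromBlocks (ρ ⊗ₖ τ'') 0 0 0 := by
    rw [← conjTranspose_mul_initMap_mul hV''.1, ← hMl ρ hρ]
    simp only [C, M, X, Matrix.mul_add, Matrix.add_mul, Matrix.mul_smul, Matrix.smul_mul]
  obtain ⟨hM₂₂, hC₂₂⟩ := toBlocks₂₂_eq_zero_of_smul_add_smul_eq_fromBlocks hlh.1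
    (sub_pos.2 hlh.2) ((h𝒩.posSemidef_apply hX).conjTranspose_mul_mul_same V'')
    (hX.conjTranspose_mul_mul_same V'') hkey
  obtain ⟨_, t, -, -, hcompρ⟩ := hcomp
  have hC₁₁ : C.toBlocks₁₁ = ρ ⊗ₖ t := by
    simpa [toBlocks₁₁_conjTranspose_mul_projOf_conj hV''.1,
      conjTranspose_mul_initMap_mul hV''.1] using
      congrArg (fun A : Matrix (Fin dP) (Fin dP) ℂ => (V''ᴴ * A * V'').toBlocks₁₁)
        (hcompρ ρ hρ).2
  have ht : t.trace = 1 := by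
    have htrC : C.trace = X.trace := trace_mul_mul_of_mul_eq_one hV''.2 X
    rw [← fromBlocks_toBlocks C, trace_fromBlocks, hC₁₁, hC₂₂, trace_initMap hV'.1] at htrC
    simpa [trace_kronecker, hρ.2, hτ'.2] using htrC
  have hC : ptrF C.toBlocks₁₁ = ρ := by rw [hC₁₁, ptrF_kronecker, ht, one_smul]
  have hM : ptrF M.toBlocks₁₁ = ρ :=
    ptrF_toBlocks₁₁_eq_of_smul_add_smul_eq (by exact_mod_cast hlh.1.ne') (by push_cast; ring)
      hτ''.2 hC hkey
  exact ⟨resetGauge_eq_initMap τF hC hC₂₂,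
    (resetGauge_eq_initMap τF hM hM₂₂).trans (resetGauge_eq_initMap τF hC hC₂₂).symm⟩

/-- the explicit encoder `Φ_λ̂` built from a compatible faulty
initialization encodes correctly and tolerates the noise `𝒩`. -/
theorem stmt18 (dL dP dF' dR' dF'' dR'' : ℕ)
    (V' : Matrix (Fin dP) ((Fin dL × Fin dF') ⊕ Fin dR') ℂ)
    (hV' : IsUnitaryMx V')
    (τ' : Matrix (Fin dF') (Fin dF') ℂ)
    (hτ' : τ'.PosDef ∧ τ'.trace = 1)
    (𝒩 : Matrix (Fin dP) (Fin dP) ℂ → Matrix (Fin dP) (Fin dP) ℂ)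
    (h𝒩 : IsCPTP 𝒩)
    (lh : ℝ) (hlh : lh ∈ Set.Ioo (0:ℝ) 1)
    (V'' : Matrix (Fin dP) ((Fin dL × Fin dF'') ⊕ Fin dR'') ℂ)
    (hV'' : IsUnitaryMx V'')
    (τ'' : Matrix (Fin dF'') (Fin dF'') ℂ)
    (hτ'' : τ''.PosDef ∧ τ''.trace = 1)
    (hMl : ∀ ρ : Matrix (Fin dL) (Fin dL) ℂ, IsDensity ρ →
      (lh : ℂ) • 𝒩 (initMap V' τ' ρ) + ((1 - lh : ℝ) : ℂ) • initMap V' τ' ρ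
        = initMap V'' τ'' ρ)
    (hcomp : Compatible V' τ' V'' τ'')
    (τF : Matrix (Fin dF'') (Fin dF'') ℂ) (hτF : IsDensity τF) :
    ∀ ρ : Matrix (Fin dL) (Fin dL) ℂ, IsDensity ρ →
      (fun A : Matrix (Fin dP) (Fin dP) ℂ =>
          V'' * Matrix.fromBlocks
            ((ptrF (Matrix.toBlocks₁₁ (V''ᴴ * A * V''))) ⊗ₖ τF) 0 0
            (Matrix.toBlocks₂₂ (V''ᴴ * A * V'')) * V''ᴴ) (initMap V' τ' ρ)
        = initMap V'' τF ρ ∧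
      (fun A : Matrix (Fin dP) (Fin dP) ℂ =>
          V'' * Matrix.fromBlocks
            ((ptrF (Matrix.toBlocks₁₁ (V''ᴴ * A * V''))) ⊗ₖ τF) 0 0
            (Matrix.toBlocks₂₂ (V''ᴴ * A * V'')) * V''ᴴ) (𝒩 (initMap V' τ' ρ))
        = (fun A : Matrix (Fin dP) (Fin dP) ℂ =>
          V'' * Matrix.fromBlocks
            ((ptrF (Matrix.toBlocks₁₁ (V''ᴴ * A * V''))) ⊗ₖ τF) 0 0
            (Matrix.toBlocks₂₂ (V''ᴴ * A * V'')) * V''ᴴ) (initMap V' τ' ρ) :=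
  stmt18_general dL dP dF' dR' dF'' dR'' V' hV' τ' hτ' 𝒩 h𝒩 lh hlh V'' hV'' τ'' hτ'' hMl hcomp τF
end
end
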